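/- arXiv:1902.02393 — 4 statements merged into one kernel-verified Lean document; each statement's English description precedes it below -/
import Mathlib

section
/- Let L be a finite set partitioned into n pairwise disjoint nonempty subsets L_1,...,L_n whose union is L, and for each i let k_i be a distinguished element not in L. For a nonempty subset B ⊆ L define the local projection B↓i to be B if B ⊆ L_i, and (B ∩ L_i) ∪ {k_i} otherwise; define the global interpretation ⟦B↓i⟧ to be B↓i if k_i ∉ B↓i and (B↓i \ {k_i}) ∪ (L \ L_i) if k_i ∈ B↓i. Then B = ⋂_{i=1}^n ⟦B↓i⟧. -/
open scoped Classical in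
/-- Local projection of a global belief `B` onto sensor `i`'s region `Li`,
with auxiliary location `ki`. -/
noncomputable def projBelief {α : Type*} (Li : Set α) (ki : α) (B : Set α) : Set α :=
  if B ⊆ Li then B else (B ∩ Li) ∪ {ki}

open scoped Classical in
/-- Global interpretation of sensor `i`'s local belief. -/
noncomputable def interpBelief {α : Type*} (L Li : Set α) (ki : α) (B : Set α) : Set α :=
  if ki ∈ projBelief Li ki B then (projBelief Li ki B \ {ki}) ∪ (L \ Li)
  else projBelief Li ki B

theorem global_belief_eq_inter_interp {α : Type*} {n : ℕ}
    (L : Set α) (hLfin : L.Finite)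
    (part : Fin n → Set α)
    (hcover : (⋃ i, part i) = L)
    (hdisj : ∀ i j : Fin n, i ≠ j → part i ∩ part j = ∅)
    (hne : ∀ i, (part i).Nonempty)
    (k : Fin n → α) (hk : ∀ i, k i ∉ L)
    (B : Set α) (hB : B ⊆ L) (hBne : B.Nonempty) :
    B = ⋂ i, interpBelief L (part i) (k i) B := by
  classical
  apply Set.Subset.antisymm
  · intro x hx
    refine Set.mem_iInter.2 fun i => ?_
    unfold interpBelief projBelief
    by_cases hsub : B ⊆ part i
    · simp only [if_pos hsub]
      have hki : k i ∉ B := fun h => hk i (hB h)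
      rw [if_neg hki]; exact hx
    · simp only [if_neg hsub]
      have hki : k i ∈ (B ∩ part i) ∪ {k i} := Or.inr rfl
      rw [if_pos hki]
      by_cases hxi : x ∈ part i
      · left
        exact ⟨Or.inl ⟨hx, hxi⟩, fun h => hk i (hB (h ▸ hx))⟩
      · right; exact ⟨hB hx, hxi⟩
  · intro x hx
    have hxL : x ∈ L := by
      have h0 := Set.mem_iInter.1 hx
      -- each interp is a subset of L
      rcases hBne with ⟨b, hb⟩
      have hbL := hB hb
      have hbU : b ∈ ⋃ i, part i := hcover ▸ hbL
      rcases Set.mem_iUnion.1 hbU with ⟨i, hbi⟩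
      have := h0 i
      unfold interpBelief projBelief at this
      by_cases hsub : B ⊆ part i
      · simp only [if_pos hsub] at this
        have hki : k i ∉ B := fun h => hk i (hB h)
        rw [if_neg hki] at this
        exact hB this
      · simp only [if_neg hsub] at this
        have hki : k i ∈ (B ∩ part i) ∪ {k i} := Or.inr rfl
        rw [if_pos hki] at this
        rcases this with ⟨h1, h2⟩ | ⟨h1, _⟩
        · rcases h1 with h3 | h3
          · exact hB h3.1
          · exact absurd h3 h2
        · exact h1
    have hxU : x ∈ ⋃ i, part i := hcover ▸ hxL
    rcases Set.mem_iUnion.1 hxU with ⟨i, hxi⟩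
    have := Set.mem_iInter.1 hx i
    unfold interpBelief projBelief at this
    by_cases hsub : B ⊆ part i
    · simp only [if_pos hsub] at this
      have hki : k i ∉ B := fun h => hk i (hB h)
      rw [if_neg hki] at this
      exact this
    · simp only [if_neg hsub] at this
      have hki : k i ∈ (B ∩ part i) ∪ {k i} := Or.inr rfl
      rw [if_pos hki] at this
      rcases this with ⟨h1, h2⟩ | ⟨_, h3⟩
      · rcases h1 with h4 | h4
        · exact h4.1
        · exact absurd h4 h2
      · exact absurd hxi h3
end

section
/- Let L be a finite set partitioned into n pairwise disjoint subsets L_1,...,L_n with n ≥ 2, let b ≥ 1, and let B ⊆ L be a nonempty finite set. Define B↓i as B if B ⊆ L_i, and (B ∩ L_i) ∪ {k_i} otherwise (with k_i ∉ L). Suppose that for every i, the cardinality of B↓i is at most ⌊b/n⌋ + 1. Then the cardinality of B is at most b. -/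
theorem local_safety_implies_global_safety {α : Type*} {n b : ℕ}
    (hn : 2 ≤ n) (hb : 1 ≤ b)
    (L : Set α) (hLfin : L.Finite)
    (part : Fin n → Set α)
    (hcover : (⋃ i, part i) = L)
    (hdisj : ∀ i j : Fin n, i ≠ j → part i ∩ part j = ∅)
    (k : Fin n → α) (hk : ∀ i, k i ∉ L)
    (B : Set α) (hB : B ⊆ L) (hBne : B.Nonempty)
    (hloc : ∀ i, (projBelief (part i) (k i) B).ncard ≤ b / n + 1) :
    B.ncard ≤ b := by
  classical
  have hBfin : B.Finite := hLfin.subset hB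
  have hdiv : b / n ≤ b / 2 := Nat.div_le_div_left hn (by norm_num)
  by_cases hcase : ∃ i, B ⊆ part i
  · obtain ⟨i, hi⟩ := hcase
    have := hloc i
    rw [projBelief, if_pos hi] at this
    have h2 : b / 2 + 1 ≤ b := by omega
    omega
  · push_neg at hcase
    have hle : ∀ i, (B ∩ part i).ncard ≤ b / n := by
      intro i
      have := hloc i
      rw [projBelief, if_neg (hcase i)] at this
      have hki : k i ∉ B ∩ part i := by
        intro h
        exact hk i (hB h.1)
      rw [Set.union_singleton, Set.ncard_insert_of_notMem hki
        (hBfin.inter_of_left _)] at this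
      omega
    have hBeq : B = ⋃ i, B ∩ part i := by
      rw [← Set.inter_iUnion, hcover, Set.inter_eq_left.mpr hB]
    have hfin : ∀ i, (B ∩ part i).Finite := fun i => hBfin.inter_of_left _
    have hcard : B.ncard ≤ ∑ i : Fin n, (B ∩ part i).ncard := by
      calc B.ncard = hBfin.toFinset.card := Set.ncard_eq_toFinset_card B hBfin
        _ ≤ (Finset.univ.biUnion fun i => (hfin i).toFinset).card := by
            apply Finset.card_le_card
            intro x hx
            simp only [Set.Finite.mem_toFinset] at hx
            have := hBeq ▸ hx
            simp only [Set.mem_iUnion] at this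
            obtain ⟨i, hi⟩ := this
            simp only [Finset.mem_biUnion, Set.Finite.mem_toFinset]
            exact ⟨i, Finset.mem_univ i, hi⟩
        _ ≤ ∑ i : Fin n, ((hfin i).toFinset).card := Finset.card_biUnion_le
        _ = ∑ i : Fin n, (B ∩ part i).ncard :=
            Finset.sum_congr rfl fun i _ => (Set.ncard_eq_toFinset_card _ (hfin i)).symm
    have : B.ncard ≤ n * (b / n) := by
      calc B.ncard ≤ ∑ i : Fin n, (B ∩ part i).ncard := hcard
        _ ≤ ∑ _i : Fin n, b / n := Finset.sum_le_sum fun i _ => hle i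
        _ = n * (b / n) := by simp [Finset.sum_const, mul_comm]
    exact this.trans (Nat.mul_div_le b n)
end

section
/- Let L be a finite set partitioned into n ≥ 2 disjoint subsets L_1,...,L_n with each |L_i| ≥ ⌊b/n⌋ + 1 for some b ≥ 1 with n = 2 and b = 5 (concretely: |L_1|, |L_2| ≥ 3). Then there exists a nonempty B ⊆ L such that for each i ∈ {1,2}, |B↓i| ≤ 4 (where B↓i = B if B ⊆ L_i, else (B ∩ L_i) ∪ {k_i}), yet |B| = 6 > 5. -/
theorem local_bound_four_insufficient {α : Type*}
    (L L1 L2 : Set α) (hLfin : L.Finite)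
    (hcover : L1 ∪ L2 = L) (hdisj : L1 ∩ L2 = ∅)
    (h1 : 3 ≤ L1.ncard) (h2 : 3 ≤ L2.ncard)
    (k1 k2 : α) (hk1 : k1 ∉ L) (hk2 : k2 ∉ L) (hkk : k1 ≠ k2) :
    ∃ B : Set α, B ⊆ L ∧ B.Nonempty ∧
      (projBelief L1 k1 B).ncard ≤ 4 ∧ (projBelief L2 k2 B).ncard ≤ 4 ∧
      B.ncard = 6 ∧ 5 < B.ncard := by
  have hL1 : L1 ⊆ L := hcover ▸ Set.subset_union_left
  have hL2 : L2 ⊆ L := hcover ▸ Set.subset_union_right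
  have hL1f : L1.Finite := hLfin.subset hL1
  have hL2f : L2.Finite := hLfin.subset hL2
  obtain ⟨S1, hS1sub, hS1card⟩ := Set.exists_subset_card_eq h1
  obtain ⟨S2, hS2sub, hS2card⟩ := Set.exists_subset_card_eq h2
  have hS1f : S1.Finite := hL1f.subset hS1sub
  have hS2f : S2.Finite := hL2f.subset hS2sub
  have hS1ne : S1.Nonempty := Set.nonempty_of_ncard_ne_zero (by omega)
  have hS2ne : S2.Nonempty := Set.nonempty_of_ncard_ne_zero (by omega)
  have hdisjS : Disjoint S1 S2 := by
    rw [Set.disjoint_iff_inter_eq_empty]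
    apply Set.eq_empty_of_subset_empty
    rw [← hdisj]
    exact Set.inter_subset_inter hS1sub hS2sub
  refine ⟨S1 ∪ S2, Set.union_subset (hS1sub.trans hL1) (hS2sub.trans hL2),
    hS1ne.mono Set.subset_union_left, ?_, ?_, ?_, ?_⟩
  · have hnsub : ¬ (S1 ∪ S2 ⊆ L1) := by
      intro h
      obtain ⟨x, hx⟩ := hS2ne
      have : x ∈ L1 ∩ L2 := ⟨h (Or.inr hx), hS2sub hx⟩
      simp [hdisj] at this
    have hinter : (S1 ∪ S2) ∩ L1 = S1 := by
      rw [Set.union_inter_distrib_right, Set.inter_eq_left.mpr hS1sub]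
      have : S2 ∩ L1 = ∅ := by
        apply Set.eq_empty_of_subset_empty
        rw [← hdisj]
        exact fun x ⟨hx1, hx2⟩ => ⟨hx2, hS2sub hx1⟩
      simp [this]
    rw [projBelief, if_neg hnsub, hinter]
    calc (S1 ∪ {k1}).ncard ≤ S1.ncard + ({k1} : Set α).ncard :=
          Set.ncard_union_le _ _
      _ ≤ 4 := by simp [hS1card]
  · have hnsub : ¬ (S1 ∪ S2 ⊆ L2) := by
      intro h
      obtain ⟨x, hx⟩ := hS1ne
      have : x ∈ L1 ∩ L2 := ⟨hS1sub hx, h (Or.inl hx)⟩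
      simp [hdisj] at this
    have hinter : (S1 ∪ S2) ∩ L2 = S2 := by
      rw [Set.union_inter_distrib_right, Set.inter_eq_left.mpr hS2sub]
      have : S1 ∩ L2 = ∅ := by
        apply Set.eq_empty_of_subset_empty
        rw [← hdisj]
        exact fun x ⟨hx1, hx2⟩ => ⟨hS1sub hx1, hx2⟩
      simp [this]
    rw [projBelief, if_neg hnsub, hinter]
    calc (S2 ∪ {k2}).ncard ≤ S2.ncard + ({k2} : Set α).ncard :=
          Set.ncard_union_le _ _
      _ ≤ 4 := by simp [hS2card]
  · rw [Set.ncard_union_eq hdisjS hS1f hS2f, hS1card, hS2card]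
  · rw [Set.ncard_union_eq hdisjS hS1f hS2f, hS1card, hS2card]; omega
end

section
/- Let L be a finite set partitioned into n ≥ 2 disjoint subsets L_1,...,L_n, let b ≥ 1, and let B ⊆ L be nonempty. If |B| > b, then there exists an index i such that |B↓i| > ⌊b/n⌋ + 1 or (k_i ∉ B↓i and |B↓i| > b), where B↓i = B if B ⊆ L_i and (B ∩ L_i) ∪ {k_i} otherwise. In fact, there exists i with |B↓i| ≥ ⌊b/n⌋ + 2, or B ⊆ L_i for some i with |B| > b. -/
theorem global_violation_implies_local_violation {α : Type*} {n b : ℕ}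
    (hn : 2 ≤ n) (hb : 1 ≤ b)
    (L : Set α) (hLfin : L.Finite)
    (part : Fin n → Set α)
    (hcover : (⋃ i, part i) = L)
    (hdisj : ∀ i j : Fin n, i ≠ j → part i ∩ part j = ∅)
    (k : Fin n → α) (hk : ∀ i, k i ∉ L)
    (B : Set α) (hB : B ⊆ L) (hBne : B.Nonempty)
    (hbig : b < B.ncard) :
    (∃ i, b / n + 1 < (projBelief (part i) (k i) B).ncard ∨
      (k i ∉ projBelief (part i) (k i) B ∧ b < (projBelief (part i) (k i) B).ncard)) ∧
    ((∃ i, b / n + 2 ≤ (projBelief (part i) (k i) B).ncard) ∨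
      (∃ i, B ⊆ part i ∧ b < B.ncard)) := by
  classical
  have hBfin : B.Finite := hLfin.subset hB
  by_cases hsub : ∃ i, B ⊆ part i
  · obtain ⟨i, hi⟩ := hsub
    have hproj : projBelief (part i) (k i) B = B := by simp [projBelief, hi]
    constructor
    · exact ⟨i, Or.inr ⟨by rw [hproj]; exact fun h => hk i (hB h), by rw [hproj]; exact hbig⟩⟩
    · exact Or.inr ⟨i, hi, hbig⟩
  · push_neg at hsub
    -- exists i with (B ∩ part i).ncard ≥ b/n + 1
    have hsum : B.ncard ≤ ∑ i : Fin n, (B ∩ part i).ncard := by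
      have hkey : hBfin.toFinset ⊆ Finset.univ.biUnion (fun i : Fin n =>
          ((hBfin.inter_of_left (part i)).toFinset)) := by
        intro x hx
        have hxB : x ∈ B := by simpa using hx
        have : x ∈ L := hB hxB
        rw [← hcover] at this
        obtain ⟨i, hi⟩ := Set.mem_iUnion.mp this
        exact Finset.mem_biUnion.mpr ⟨i, Finset.mem_univ i, by simp [hxB, hi]⟩
      calc B.ncard = hBfin.toFinset.card := Set.ncard_eq_toFinset_card B hBfin
        _ ≤ (Finset.univ.biUnion (fun i : Fin n =>
              ((hBfin.inter_of_left (part i)).toFinset))).card := Finset.card_le_card hkey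
        _ ≤ ∑ i : Fin n, ((hBfin.inter_of_left (part i)).toFinset).card :=
            Finset.card_biUnion_le
        _ = ∑ i : Fin n, (B ∩ part i).ncard := by
            refine Finset.sum_congr rfl fun i _ => ?_
            exact (Set.ncard_eq_toFinset_card _ _).symm
    have hex : ∃ i : Fin n, b / n + 1 ≤ (B ∩ part i).ncard := by
      by_contra h
      push_neg at h
      have : ∑ i : Fin n, (B ∩ part i).ncard ≤ ∑ _i : Fin n, b / n :=
        Finset.sum_le_sum fun i _ => Nat.lt_succ_iff.mp (h i)
      have hle : B.ncard ≤ n * (b / n) := by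
        simpa [Finset.sum_const, mul_comm] using hsum.trans this
      have hnb : n * (b / n) ≤ b := by
        rw [mul_comm]; exact Nat.div_mul_le_self b n
      have hconst : ∑ _i : Fin n, b / n = n * (b / n) := by
        simp [Finset.sum_const, mul_comm]
      omega
    obtain ⟨i, hi⟩ := hex
    have hki : k i ∉ B ∩ part i := fun h => hk i (hB h.1)
    have hproj : projBelief (part i) (k i) B = insert (k i) (B ∩ part i) := by
      simp [projBelief, hsub i, Set.union_singleton]
    have hcard : (projBelief (part i) (k i) B).ncard = (B ∩ part i).ncard + 1 := by
      rw [hproj, Set.ncard_insert_of_notMem hki (hBfin.inter_of_left _)]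
    constructor
    · exact ⟨i, Or.inl (by omega)⟩
    · exact Or.inl ⟨i, by omega⟩
end
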